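/- Let G be an abelian group acting on a ranked poset P and let H be a subgroup of G. Then G/H acts on P/H, the iterated quotient (P/H)/(G/H) equals P/G, and if the action of G on P is translative then so is the induced action of G/H on P/H. -/

import Mathlib

/-!
All three parts are orbit bookkeeping. Normality of `H` (automatic for abelian `G`) makes the
coset action on `H`-orbits well defined; an `H`-orbit of a `G`-translate is itself a
`G`-translate, so the iterated quotient has the same orbits and the same order as `P/G`; and if
`h₁ • p` and `h₂ • g • p` lie below `q`, then `p` and `(h₁⁻¹ * h₂ * g) • p` lie below `h₁⁻¹ • q`,
so translativity of `G` fixes `p` by the element `h₁⁻¹ * h₂ * g` of the coset `gH`.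
-/

namespace MulAction

def IsTranslative (G P : Type*) [Group G] [Preorder P] [MulAction G P] : Prop :=
  ∀ (p : P) (g : G), (∃ u : P, p ≤ u ∧ g • p ≤ u) → g • p = p

variable {G P : Type*} [Group G] [MulAction G P]

theorem exists_mem_smul_smul_eq_smul_of_inv_mul_mem {H : Subgroup G} [hH : H.Normal]
    {g g' : G} {p p' : P} (hg : g⁻¹ * g' ∈ H) (hp : ∃ h ∈ H, h • p = p') :
    ∃ h ∈ H, h • g • p = g' • p' := by
  obtain ⟨h, hh, rfl⟩ := hp
  refine ⟨g * (g⁻¹ * g' * h) * g⁻¹, hH.conj_mem _ (H.mul_mem hg hh) g, ?_⟩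
  rw [smul_smul, smul_smul]
  congr 1
  group

theorem exists_smul_smul_iff_exists_smul (H : Subgroup G) (R : P → Prop) (p : P) :
    (∃ g : G, ∃ h ∈ H, R (h • g • p)) ↔ ∃ g : G, R (g • p) := by
  constructor
  · rintro ⟨g, h, -, hR⟩
    exact ⟨h * g, by rwa [mul_smul]⟩
  · rintro ⟨g, hR⟩
    exact ⟨g, 1, H.one_mem, by rwa [one_smul]⟩

theorem exists_mem_smul_smul_eq_of_isTranslative [Preorder P]
    (hmono : ∀ g : G, Monotone (fun x : P => g • x)) (htr : IsTranslative G P)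
    {H : Subgroup G} {g : G} {p q : P}
    (hp : ∃ h ∈ H, h • p ≤ q) (hgp : ∃ h ∈ H, h • g • p ≤ q) :
    ∃ h ∈ H, h • g • p = p := by
  obtain ⟨h₁, hh₁, hle₁⟩ := hp
  obtain ⟨h₂, hh₂, hle₂⟩ := hgp
  have hp_le : p ≤ h₁⁻¹ • q := by
    simpa only [inv_smul_smul] using hmono h₁⁻¹ hle₁
  have hgp_le : (h₁⁻¹ * h₂ * g) • p ≤ h₁⁻¹ • q := by
    simpa only [mul_smul] using hmono h₁⁻¹ hle₂
  refine ⟨h₁⁻¹ * h₂, H.mul_mem (H.inv_mem hh₁) hh₂, ?_⟩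
  rw [smul_smul]
  exact htr p _ ⟨_, hp_le, hgp_le⟩

end MulAction

open MulAction in
theorem abelian_subgroup_quotient_action_general
    {G P : Type*} [CommGroup G] [PartialOrder P] [MulAction G P]
    (hact : ∀ (g : G) (x y : P), x ≤ y ↔ g • x ≤ g • y)
    (H : Subgroup G) :
    -- (a) the action of `G/H` on `P/H` is well defined
    (∀ (g g' : G) (p p' : P), g⁻¹ * g' ∈ H → (∃ h ∈ H, h • p = p') →
        ∃ h ∈ H, h • (g • p) = g' • p') ∧
    -- (b) `(P/H)/(G/H) = P/G`: orbits and order relations coincide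
    (∀ p q : P, (∃ g : G, ∃ h ∈ H, h • (g • p) = q) ↔ ∃ g : G, g • p = q) ∧
    (∀ p q : P, (∃ g : G, ∃ h ∈ H, h • (g • p) ≤ q) ↔ ∃ g : G, g • p ≤ q) ∧
    -- (c) translativity is inherited by the `G/H`-action on `P/H`
    ((∀ (p : P) (g : G), (∃ u : P, p ≤ u ∧ g • p ≤ u) → g • p = p) →
      ∀ (g : G) (p q : P), (∃ h ∈ H, h • p ≤ q) → (∃ h ∈ H, h • (g • p) ≤ q) →
        ∃ h ∈ H, h • (g • p) = p) := by
  have hmono (g : G) : Monotone (fun x : P => g • x) := fun x y hxy => (hact g x y).1 hxy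
  refine ⟨fun g g' p p' => exists_mem_smul_smul_eq_smul_of_inv_mul_mem,
    fun p q => exists_smul_smul_iff_exists_smul H (· = q) p,
    fun p q => exists_smul_smul_iff_exists_smul H (· ≤ q) p, ?_⟩
  intro htr g p q
  exact exists_mem_smul_smul_eq_of_isTranslative hmono htr

/-- Let `G` be an abelian group acting (by order automorphisms) on a ranked
poset `P` and let `H ≤ G`. Then: (a) `G/H` acts on `P/H` (the action on `H`-orbits is
well defined on cosets and orbits); (b) the iterated quotient `(P/H)/(G/H)` equals `P/G`
(the orbit relations and order relations coincide); (c) if the `G`-action is translative,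
then so is the induced `G/H`-action on `P/H`. -/
theorem abelian_subgroup_quotient_action
    {G P : Type*} [CommGroup G] [PartialOrder P] [OrderBot P] [MulAction G P]
    (hact : ∀ (g : G) (x y : P), x ≤ y ↔ g • x ≤ g • y)
    (rk : P → ℕ)
    (hrk0 : rk ⊥ = 0)
    (hcov : ∀ x y : P, x ⋖ y → rk y = rk x + 1)
    (H : Subgroup G) :
    -- (a) the action of `G/H` on `P/H` is well defined
    (∀ (g g' : G) (p p' : P), g⁻¹ * g' ∈ H → (∃ h ∈ H, h • p = p') →
        ∃ h ∈ H, h • (g • p) = g' • p') ∧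
    -- (b) `(P/H)/(G/H) = P/G`: orbits and order relations coincide
    (∀ p q : P, (∃ g : G, ∃ h ∈ H, h • (g • p) = q) ↔ ∃ g : G, g • p = q) ∧
    (∀ p q : P, (∃ g : G, ∃ h ∈ H, h • (g • p) ≤ q) ↔ ∃ g : G, g • p ≤ q) ∧
    -- (c) translativity is inherited by the `G/H`-action on `P/H`
    ((∀ (p : P) (g : G), (∃ u : P, p ≤ u ∧ g • p ≤ u) → g • p = p) →
      ∀ (g : G) (p q : P), (∃ h ∈ H, h • p ≤ q) → (∃ h ∈ H, h • (g • p) ≤ q) →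
        ∃ h ∈ H, h • (g • p) = p) :=
  abelian_subgroup_quotient_action_general hact H
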